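/- No species tree estimator ψ simultaneously satisfies: (A1⁻) for any profile of rooted phylogenetic trees, ψ(P) is a rooted phylogenetic tree on some subset of the union of the input leaf sets; (A2) ψ(T,…,T) = T (in particular ψ of a single-tree profile (T) equals T); (A3) removing from a profile a tree whose leaf set has at most two taxa, each occurring in another input tree, does not change the output; (A4) for every nonempty Y ⊆ X, ψ(P|Y) is equal to or refined by ψ(P)|Y. -/

import Mathlib

def IsHierarchyOn {α : Type*} [DecidableEq α] (X : Finset α) (T : Finset (Finset α)) : Prop :=
  (∀ A ∈ T, A ⊆ X ∧ A.Nonempty) ∧ X ∈ T ∧ (∀ x ∈ X, ({x} : Finset α) ∈ T) ∧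
  ∀ A ∈ T, ∀ B ∈ T, A ∩ B = ∅ ∨ A ⊆ B ∨ B ⊆ A

/-- The leaf set of a tree (hierarchy): the union of its clusters. -/
def leaves {α : Type*} [DecidableEq α] (T : Finset (Finset α)) : Finset α := T.sup id

/-- A rooted phylogenetic tree, identified with a hierarchy on its leaf set. -/
def IsTree {α : Type*} [DecidableEq α] (T : Finset (Finset α)) : Prop :=
  IsHierarchyOn (leaves T) T

def restrict {α : Type*} [DecidableEq α] (T : Finset (Finset α)) (W : Finset α) :
    Finset (Finset α) :=
  (T.image (· ∩ W)).filter (·.Nonempty)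

/-- The union of the leaf sets of the trees in a profile. -/
def unionLeaves {α : Type*} [DecidableEq α] (P : List (Finset (Finset α))) : Finset α :=
  (P.map leaves).foldr (· ∪ ·) ∅

/-- `P|Y`: restrict each tree of the profile to `Y` and delete empty restrictions. -/
def restrictProfile {α : Type*} [DecidableEq α] (P : List (Finset (Finset α)))
    (Y : Finset α) : List (Finset (Finset α)) :=
  (P.map (fun T => restrict T Y)).filter (· ≠ ∅)

/-- A profile: a nonempty sequence of rooted phylogenetic trees. -/
def ValidProfile {α : Type*} [DecidableEq α] (P : List (Finset (Finset α))) : Prop :=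
  P ≠ [] ∧ ∀ T ∈ P, IsTree T

/-!
Fix a set `X` of 30 taxa. Every choice `σ` of a rooted triple on each 3-subset of `X` gives a
profile `P σ`. Restricted to a 3-subset `B`, every other triple of `P σ` keeps at most two taxa,
so (A3) deletes them and (A2) gives `ψ (P σ|B) = σ B`; by (A4) the clusters of `σ B` are clusters
of `ψ (P σ)|B`. Distinct triples on `B` have incompatible cherries, so `σ ↦ ψ (P σ)` is injective.
But a tree on a subset of `X` is determined by the sizes of the least clusters containing each
pair of taxa, so there are at most `31 ^ 900` of them, fewer than the `3 ^ 4060` choices of `σ`.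
-/

section Hierarchies

variable {α : Type*} [DecidableEq α]

def Compatible (A B : Finset α) : Prop := A ∩ B = ∅ ∨ A ⊆ B ∨ B ⊆ A

lemma Compatible.subset_or_subset {A B : Finset α} (h : Compatible A B) {x : α} (hA : x ∈ A)
    (hB : x ∈ B) : A ⊆ B ∨ B ⊆ A := by
  rcases h with h | h
  · exact absurd (h ▸ Finset.mem_inter.2 ⟨hA, hB⟩) (Finset.notMem_empty x)
  · exact h

lemma Compatible.inter {A B : Finset α} (h : Compatible A B) (W : Finset α) :
    Compatible (A ∩ W) (B ∩ W) := by
  rcases h with h | h | h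
  · left
    rw [Finset.inter_inter_inter_comm, h, Finset.empty_inter]
  · exact Or.inr (Or.inl (Finset.inter_subset_inter_right h))
  · exact Or.inr (Or.inr (Finset.inter_subset_inter_right h))

lemma compatible_singleton (a : α) (A : Finset α) : Compatible {a} A := by
  by_cases ha : a ∈ A
  · exact Or.inr (Or.inl (Finset.singleton_subset_iff.2 ha))
  · exact Or.inl (Finset.singleton_inter_of_notMem ha)

lemma Compatible.symm {A A' : Finset α} (h : Compatible A A') : Compatible A' A := by
  rcases h with h | h | h
  · exact Or.inl (Finset.inter_comm A A' ▸ h)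
  · exact Or.inr (Or.inr h)
  · exact Or.inr (Or.inl h)

lemma card_inter_lt_of_card_eq {B B' : Finset α} (h : B'.card = B.card) (hne : B' ≠ B) :
    (B' ∩ B).card < B.card := by
  refine Finset.card_lt_card (Finset.ssubset_iff_subset_ne.2 ⟨Finset.inter_subset_right, ?_⟩)
  intro heq
  exact hne (Finset.eq_of_subset_of_card_le (Finset.inter_eq_right.1 heq) h.le).symm

lemma Compatible.eq_of_card_eq {B c c' : Finset α} (h : Compatible c c') (hc : c ⊆ B)
    (hc' : c' ⊆ B) (hcard : c.card = c'.card) (hB : B.card < c.card + c'.card) : c = c' := by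
  rcases h with h | h | h
  · have hdisj : Disjoint c c' := Finset.disjoint_iff_inter_eq_empty.2 h
    have := Finset.card_le_card (Finset.union_subset hc hc')
    rw [Finset.card_union_of_disjoint hdisj] at this
    omega
  · exact Finset.eq_of_subset_of_card_le h hcard.ge
  · exact (Finset.eq_of_subset_of_card_le h hcard.le).symm

lemma mem_leaves {T : Finset (Finset α)} {x : α} : x ∈ leaves T ↔ ∃ A ∈ T, x ∈ A := by
  simp [leaves, Finset.mem_sup]

lemma subset_leaves {T : Finset (Finset α)} {A : Finset α} (h : A ∈ T) : A ⊆ leaves T :=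
  fun _ hx => mem_leaves.2 ⟨A, h, hx⟩

namespace IsTree

variable {T : Finset (Finset α)}

lemma nonempty_of_mem (hT : IsTree T) {A : Finset α} (hA : A ∈ T) : A.Nonempty := (hT.1 A hA).2

lemma compatible (hT : IsTree T) {A B : Finset α} (hA : A ∈ T) (hB : B ∈ T) : Compatible A B :=
  hT.2.2.2 A hA B hB

lemma ne_empty (hT : IsTree T) : T ≠ ∅ := Finset.ne_empty_of_mem hT.2.1

end IsTree

section Restriction

variable {T : Finset (Finset α)} {W : Finset α}

lemma mem_restrict {A : Finset α} : A ∈ restrict T W ↔ A.Nonempty ∧ ∃ B ∈ T, B ∩ W = A := by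
  simp only [restrict, Finset.mem_filter, Finset.mem_image]
  tauto

lemma leaves_restrict : leaves (restrict T W) = leaves T ∩ W := by
  ext x
  simp only [mem_leaves, mem_restrict, Finset.mem_inter]
  constructor
  · rintro ⟨-, ⟨-, B, hB, rfl⟩, hx⟩
    exact ⟨⟨B, hB, (Finset.mem_inter.1 hx).1⟩, (Finset.mem_inter.1 hx).2⟩
  · rintro ⟨⟨B, hB, hxB⟩, hxW⟩
    exact ⟨B ∩ W, ⟨⟨x, Finset.mem_inter.2 ⟨hxB, hxW⟩⟩, B, hB, rfl⟩, Finset.mem_inter.2 ⟨hxB, hxW⟩⟩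

lemma restrict_eq_self (hT : IsTree T) (h : leaves T ⊆ W) : restrict T W = T := by
  have hfix : ∀ A ∈ T, A ∩ W = A := fun A hA =>
    Finset.inter_eq_left.2 ((subset_leaves hA).trans h)
  ext A
  simp only [mem_restrict]
  constructor
  · rintro ⟨-, B, hB, rfl⟩
    rwa [hfix B hB]
  · exact fun hA => ⟨hT.nonempty_of_mem hA, A, hA, hfix A hA⟩

lemma IsTree.compatible_of_mem_restrict (hT : IsTree T) {A B : Finset α}
    (hA : A ∈ restrict T W) (hB : B ∈ restrict T W) : Compatible A B := by
  obtain ⟨-, A', hA', rfl⟩ := mem_restrict.1 hA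
  obtain ⟨-, B', hB', rfl⟩ := mem_restrict.1 hB
  exact (hT.compatible hA' hB').inter W

lemma IsTree.restrict (hT : IsTree T) (hne : restrict T W ≠ ∅) : IsTree (restrict T W) := by
  refine ⟨fun A hA => ⟨subset_leaves hA, (mem_restrict.1 hA).1⟩, ?_, ?_,
    fun A hA B hB => hT.compatible_of_mem_restrict hA hB⟩
  · obtain ⟨A, hA⟩ := Finset.nonempty_iff_ne_empty.2 hne
    obtain ⟨⟨x, hx⟩, B, hB, rfl⟩ := mem_restrict.1 hA
    rw [leaves_restrict]
    refine mem_restrict.2 ⟨⟨x, ?_⟩, leaves T, hT.2.1, rfl⟩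
    exact Finset.inter_subset_inter_right (subset_leaves hB) hx
  · intro x hx
    rw [leaves_restrict, Finset.mem_inter] at hx
    refine mem_restrict.2 ⟨Finset.singleton_nonempty x, {x}, hT.2.2.1 x hx.1, ?_⟩
    exact Finset.singleton_inter_of_mem hx.2

end Restriction

section Profile

variable {P : List (Finset (Finset α))}

lemma mem_unionLeaves {x : α} : x ∈ unionLeaves P ↔ ∃ T ∈ P, x ∈ leaves T := by
  induction P with
  | nil => simp [unionLeaves]
  | cons T P ih =>
    change x ∈ leaves T ∪ unionLeaves P ↔ _
    simp [ih]

lemma leaves_subset_unionLeaves {T : Finset (Finset α)} (hT : T ∈ P) :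
    leaves T ⊆ unionLeaves P :=
  fun _ hx => mem_unionLeaves.2 ⟨T, hT, hx⟩

lemma unionLeaves_subset {X : Finset α} (h : ∀ T ∈ P, leaves T ⊆ X) : unionLeaves P ⊆ X := by
  intro x hx
  obtain ⟨T, hT, hxT⟩ := mem_unionLeaves.1 hx
  exact h T hT hxT

lemma mem_restrictProfile {Y : Finset α} {T' : Finset (Finset α)} :
    T' ∈ restrictProfile P Y ↔ T' ≠ ∅ ∧ ∃ T ∈ P, restrict T Y = T' := by
  simp only [restrictProfile, List.mem_filter, List.mem_map, decide_eq_true_eq]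
  tauto

lemma isTree_of_mem_restrictProfile (hP : ∀ T ∈ P, IsTree T) {Y : Finset α}
    {T' : Finset (Finset α)} (hT' : T' ∈ restrictProfile P Y) : IsTree T' := by
  obtain ⟨hne, T, hT, rfl⟩ := mem_restrictProfile.1 hT'
  exact (hP T hT).restrict hne

end Profile

section Encoding

def JoinedWithin (T : Finset (Finset α)) (k : ℕ) (x y : α) : Prop :=
  ∃ C ∈ T, x ∈ C ∧ y ∈ C ∧ C.card ≤ k

variable {T S S' : Finset (Finset α)}

lemma IsTree.mem_iff_joinedWithin (hT : IsTree T) {A : Finset α} (hA : A ∈ T) {x : α}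
    (hx : x ∈ A) (y : α) : y ∈ A ↔ JoinedWithin T A.card x y := by
  refine ⟨fun hy => ⟨A, hA, hx, hy, le_rfl⟩, ?_⟩
  rintro ⟨C, hC, hxC, hyC, hCA⟩
  rcases (hT.compatible hC hA).subset_or_subset hxC hx with h | h
  · exact h hyC
  · rwa [Finset.eq_of_subset_of_card_le h hCA]

/-- The largest cluster of `S'` through `x` of size at most `|A|` is `A` itself. -/
lemma IsTree.mem_of_joinedWithin_iff (hS : IsTree S) (hS' : IsTree S')
    (h : ∀ k x y, JoinedWithin S k x y ↔ JoinedWithin S' k x y) {A : Finset α} (hA : A ∈ S) :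
    A ∈ S' := by
  obtain ⟨x, hx⟩ := hS.nonempty_of_mem hA
  have hcand : (S'.filter fun C => x ∈ C ∧ C.card ≤ A.card).Nonempty := by
    obtain ⟨C, hC, hxC, -, hCA⟩ := (h _ x x).1 ⟨A, hA, hx, hx, le_rfl⟩
    exact ⟨C, Finset.mem_filter.2 ⟨hC, hxC, hCA⟩⟩
  obtain ⟨C, hC, hCmax⟩ := Finset.exists_max_image _ Finset.card hcand
  obtain ⟨hCS', hxC, hCA⟩ := Finset.mem_filter.1 hC
  suffices A = C from this ▸ hCS'
  refine subset_antisymm (fun y hy => ?_) (fun y hy => ?_)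
  · obtain ⟨D, hD, hxD, hyD, hDA⟩ := (h _ x y).1 ((hS.mem_iff_joinedWithin hA hx y).1 hy)
    have hDC := hCmax D (Finset.mem_filter.2 ⟨hD, hxD, hDA⟩)
    rcases (hS'.compatible hD hCS').subset_or_subset hxD hxC with hsub | hsub
    · exact hsub hyD
    · rwa [Finset.eq_of_subset_of_card_le hsub hDC]
  · exact (hS.mem_iff_joinedWithin hA hx y).2 ((h _ x y).2 ⟨C, hCS', hxC, hy, hCA⟩)

lemma IsTree.eq_of_joinedWithin_iff (hS : IsTree S) (hS' : IsTree S')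
    (h : ∀ k x y, JoinedWithin S k x y ↔ JoinedWithin S' k x y) : S = S' :=
  subset_antisymm (fun _ hA => hS.mem_of_joinedWithin_iff hS' h hA)
    (fun _ hA => hS'.mem_of_joinedWithin_iff hS (fun k x y => (h k x y).symm) hA)

/-- `0` when no cluster contains both `x` and `y`. -/
noncomputable def lcaCard (T : Finset (Finset α)) (x y : α) : ℕ :=
  sInf (Finset.card '' {C | C ∈ T ∧ x ∈ C ∧ y ∈ C})

lemma IsTree.joinedWithin_iff (hT : IsTree T) {k : ℕ} {x y : α} :
    JoinedWithin T k x y ↔ 0 < lcaCard T x y ∧ lcaCard T x y ≤ k := by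
  constructor
  · rintro ⟨C, hC, hxC, hyC, hCk⟩
    have hmem : C.card ∈ Finset.card '' {C | C ∈ T ∧ x ∈ C ∧ y ∈ C} := ⟨C, ⟨hC, hxC, hyC⟩, rfl⟩
    obtain ⟨D, ⟨hD, -⟩, hDcard⟩ := Nat.sInf_mem ⟨_, hmem⟩
    refine ⟨?_, (Nat.sInf_le hmem).trans hCk⟩
    rw [lcaCard, ← hDcard]
    exact Finset.card_pos.2 (hT.nonempty_of_mem hD)
  · rintro ⟨hpos, hle⟩
    have hne : (Finset.card '' {C | C ∈ T ∧ x ∈ C ∧ y ∈ C}).Nonempty :=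
      Set.nonempty_iff_ne_empty.2 fun h => hpos.ne' (by rw [lcaCard, h, Nat.sInf_empty])
    obtain ⟨C, ⟨hC, hxC, hyC⟩, hCcard⟩ := Nat.sInf_mem hne
    exact ⟨C, hC, hxC, hyC, hCcard.trans_le hle⟩

lemma lcaCard_le_card {X : Finset α} (hX : leaves T ⊆ X) (x y : α) : lcaCard T x y ≤ X.card := by
  rcases (Finset.card '' {C | C ∈ T ∧ x ∈ C ∧ y ∈ C}).eq_empty_or_nonempty with h | h
  · rw [lcaCard, h, Nat.sInf_empty]
    exact Nat.zero_le _
  · obtain ⟨C, ⟨hC, -⟩, hCcard⟩ := Nat.sInf_mem h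
    rw [lcaCard, ← hCcard]
    exact Finset.card_le_card ((subset_leaves hC).trans hX)

noncomputable def lcaCode (X : Finset α) (T : Finset (Finset α)) : X → X → Fin (X.card + 1) :=
  fun x y => ⟨min (lcaCard T x y) X.card, Nat.lt_succ_of_le (min_le_right _ _)⟩

lemma lcaCode_injOn (X : Finset α) : Set.InjOn (lcaCode X) {T | IsTree T ∧ leaves T ⊆ X} := by
  rintro S ⟨hS, hSX⟩ S' ⟨hS', hS'X⟩ h
  refine hS.eq_of_joinedWithin_iff hS' fun k x y => ?_
  by_cases hxy : x ∈ X ∧ y ∈ X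
  · have := congrArg Fin.val (congrFun (congrFun h ⟨x, hxy.1⟩) ⟨y, hxy.2⟩)
    simp only [lcaCode, min_eq_left (lcaCard_le_card hSX _ _),
      min_eq_left (lcaCard_le_card hS'X _ _)] at this
    rw [hS.joinedWithin_iff, hS'.joinedWithin_iff, this]
  · have hout : ∀ {R : Finset (Finset α)}, leaves R ⊆ X → ¬ JoinedWithin R k x y :=
      fun hRX ⟨C, hC, hxC, hyC, _⟩ =>
        hxy ⟨hRX (subset_leaves hC hxC), hRX (subset_leaves hC hyC)⟩
    exact iff_of_false (hout hSX) (hout hS'X)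

end Encoding

section Axioms

variable (ψ : List (Finset (Finset α)) → Finset (Finset α))

/-- (A1⁻) -/
def OutputsTreeOnInputTaxa : Prop :=
  ∀ P, ValidProfile P → IsTree (ψ P) ∧ leaves (ψ P) ⊆ unionLeaves P

/-- (A2) -/
def Unanimous : Prop :=
  ∀ T, IsTree T → ∀ k, 0 < k → ψ (List.replicate k T) = T

/-- (A3) -/
def IgnoresRedundantSmallTrees : Prop :=
  ∀ P, ValidProfile P → ∀ i : Fin P.length,
    (leaves (P.get i)).card ≤ 2 →
    (∀ x ∈ leaves (P.get i), ∃ j : Fin P.length, j ≠ i ∧ x ∈ leaves (P.get j)) →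
    P.eraseIdx i ≠ [] →
    ψ (P.eraseIdx i) = ψ P

/-- (A4) -/
def RefinesOnRestriction : Prop :=
  ∀ P, ValidProfile P → ∀ Y : Finset α, Y.Nonempty → Y ⊆ unionLeaves P →
    ψ (restrictProfile P Y) ⊆ restrict (ψ P) Y

variable {ψ}

lemma Unanimous.eq_of_others_small (h2 : Unanimous ψ) (h3 : IgnoresRedundantSmallTrees ψ)
    {T₀ : Finset (Finset α)} (hT₀ : IsTree T₀) {Q : List (Finset (Finset α))}
    (hQ : ∀ T ∈ Q, IsTree T) (hmem : T₀ ∈ Q)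
    (hsmall : ∀ T ∈ Q, T ≠ T₀ → (leaves T).card ≤ 2 ∧ leaves T ⊆ leaves T₀) :
    ψ Q = T₀ := by
  induction hn : Q.length generalizing Q with
  | zero => simp_all
  | succ n ih =>
    by_cases hall : ∀ T ∈ Q, T = T₀
    · rw [List.eq_replicate_iff.2 ⟨hn, hall⟩]
      exact h2 T₀ hT₀ _ n.succ_pos
    push Not at hall
    obtain ⟨T, hTQ, hTne⟩ := hall
    obtain ⟨i, hi, rfl⟩ := List.mem_iff_getElem.1 hTQ
    obtain ⟨j, hj, hjT₀⟩ := List.mem_iff_getElem.1 hmem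
    have hji : j ≠ i := fun h => hTne (by subst h; exact hjT₀)
    have hmem' : T₀ ∈ Q.eraseIdx i := List.mem_eraseIdx_iff_getElem.2 ⟨j, hj, hji, hjT₀⟩
    obtain ⟨hcard, hsub⟩ := hsmall _ hTQ hTne
    have hredundant : ∀ x ∈ leaves Q[i], ∃ k : Fin Q.length, k ≠ ⟨i, hi⟩ ∧ x ∈ leaves (Q.get k) :=
      fun x hx => ⟨⟨j, hj⟩, fun h => hji (Fin.mk.inj h), by simpa [hjT₀] using hsub hx⟩
    rw [← h3 Q ⟨List.ne_nil_of_mem hmem, hQ⟩ ⟨i, hi⟩ hcard hredundant (List.ne_nil_of_mem hmem')]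
    exact ih (fun T hT => hQ T (List.mem_of_mem_eraseIdx hT)) hmem'
      (fun T hT => hsmall T (List.mem_of_mem_eraseIdx hT))
      (by simp [List.length_eraseIdx_of_lt hi, hn])

end Axioms

section Cherry

def cherryTree (B c : Finset α) : Finset (Finset α) := insert B (insert c (B.image singleton))

variable {B c : Finset α}

lemma leaves_cherryTree (hcB : c ⊆ B) : leaves (cherryTree B c) = B := by
  refine subset_antisymm (fun x hx => ?_) (subset_leaves (Finset.mem_insert_self _ _))
  obtain ⟨A, hA, hxA⟩ := mem_leaves.1 hx
  simp only [cherryTree, Finset.mem_insert, Finset.mem_image] at hA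
  rcases hA with rfl | rfl | ⟨b, hb, rfl⟩
  · exact hxA
  · exact hcB hxA
  · rwa [Finset.mem_singleton.1 hxA]

lemma isTree_cherryTree (hcB : c ⊆ B) (hc : c.Nonempty) : IsTree (cherryTree B c) := by
  have hclusters : ∀ A ∈ cherryTree B c, A = B ∨ A = c ∨ ∃ b ∈ B, A = {b} := by
    simp [cherryTree, eq_comm]
  have hsub : ∀ A ∈ cherryTree B c, A ⊆ B := by
    intro A hA
    rcases hclusters A hA with rfl | rfl | ⟨b, hb, rfl⟩
    exacts [subset_rfl, hcB, Finset.singleton_subset_iff.2 hb]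
  unfold IsTree
  rw [leaves_cherryTree hcB]
  refine ⟨fun A hA => ⟨hsub A hA, ?_⟩, Finset.mem_insert_self _ _, fun x hx => ?_, ?_⟩
  · rcases hclusters A hA with rfl | rfl | ⟨b, -, rfl⟩
    exacts [hc.mono hcB, hc, Finset.singleton_nonempty b]
  · simp [cherryTree, hx]
  · intro A hA A' hA'
    rcases hclusters A hA with rfl | rfl | ⟨b, -, rfl⟩
    · exact Or.inr (Or.inr (hsub A' hA'))
    · rcases hclusters A' hA' with rfl | rfl | ⟨b', -, rfl⟩
      · exact Or.inr (Or.inl hcB)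
      · exact Or.inr (Or.inl subset_rfl)
      · exact (compatible_singleton b' A).symm
    · exact compatible_singleton b A'

end Cherry

end Hierarchies

section CherryChoice

variable {α : Type*} (X : Finset α)

/-- A rooted triple on a 3-set `B` is given by its cherry, a 2-subset of `B`. -/
abbrev CherryChoice : Type _ := (B : X.powersetCard 3) → B.1.powersetCard 2

variable {X} {σ : CherryChoice X}

lemma cherry_subset (B : X.powersetCard 3) : (σ B).1 ⊆ B.1 :=
  (Finset.mem_powersetCard.1 (σ B).2).1

lemma card_cherry (B : X.powersetCard 3) : (σ B).1.card = 2 :=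
  (Finset.mem_powersetCard.1 (σ B).2).2

end CherryChoice

section CherryProfile

variable {α : Type*} [DecidableEq α] {X : Finset α}

lemma card_cherryChoice : Fintype.card (CherryChoice X) = 3 ^ X.card.choose 3 := by
  rw [Fintype.card_pi]
  simp [Finset.card_powersetCard, (Finset.mem_powersetCard.1 (Subtype.prop _)).2]

noncomputable def cherryProfile (σ : CherryChoice X) : List (Finset (Finset α)) :=
  (X.powersetCard 3).attach.toList.map fun B => cherryTree B.1 (σ B).1

variable {σ : CherryChoice X}

lemma mem_cherryProfile {T : Finset (Finset α)} :
    T ∈ cherryProfile σ ↔ ∃ B, cherryTree B.1 (σ B).1 = T := by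
  simp [cherryProfile]

lemma cherryTree_mem_cherryProfile (B : X.powersetCard 3) :
    cherryTree B.1 (σ B).1 ∈ cherryProfile σ :=
  mem_cherryProfile.2 ⟨B, rfl⟩

lemma isTree_cherryTree_choice (B : X.powersetCard 3) : IsTree (cherryTree B.1 (σ B).1) :=
  isTree_cherryTree (cherry_subset B) (Finset.card_pos.1 (by rw [card_cherry]; omega))

lemma validProfile_cherryProfile (hX : (X.powersetCard 3).Nonempty) :
    ValidProfile (cherryProfile σ) := by
  refine ⟨List.ne_nil_of_mem (cherryTree_mem_cherryProfile ⟨_, hX.choose_spec⟩), ?_⟩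
  intro T hT
  obtain ⟨B, rfl⟩ := mem_cherryProfile.1 hT
  exact isTree_cherryTree_choice B

lemma unionLeaves_cherryProfile_subset : unionLeaves (cherryProfile σ) ⊆ X := by
  refine unionLeaves_subset fun T hT => ?_
  obtain ⟨B, rfl⟩ := mem_cherryProfile.1 hT
  rw [leaves_cherryTree (cherry_subset B)]
  exact (Finset.mem_powersetCard.1 B.2).1

variable {ψ : List (Finset (Finset α)) → Finset (Finset α)}

lemma cherryTree_subset_restrict (h2 : Unanimous ψ) (h3 : IgnoresRedundantSmallTrees ψ)
    (h4 : RefinesOnRestriction ψ) (B : X.powersetCard 3) :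
    cherryTree B.1 (σ B).1 ⊆ restrict (ψ (cherryProfile σ)) B.1 := by
  have hB3 : B.1.card = 3 := (Finset.mem_powersetCard.1 B.2).2
  have hT₀ := isTree_cherryTree_choice (σ := σ) B
  have hB := leaves_cherryTree (cherry_subset (σ := σ) B)
  have hmem := cherryTree_mem_cherryProfile (σ := σ) B
  have hP : ValidProfile (cherryProfile σ) := validProfile_cherryProfile ⟨_, B.2⟩
  have hpsi : ψ (restrictProfile (cherryProfile σ) B.1) = cherryTree B.1 (σ B).1 := by
    refine h2.eq_of_others_small h3 hT₀ (fun T hT => isTree_of_mem_restrictProfile hP.2 hT)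
      (mem_restrictProfile.2 ⟨hT₀.ne_empty, _, hmem, restrict_eq_self hT₀ hB.le⟩) ?_
    intro T hT hne
    obtain ⟨-, T', hT', rfl⟩ := mem_restrictProfile.1 hT
    obtain ⟨B', rfl⟩ := mem_cherryProfile.1 hT'
    have hBB' : B'.1 ≠ B.1 := by
      rintro hBB'
      obtain rfl : B' = B := Subtype.ext hBB'
      exact hne (restrict_eq_self hT₀ hB.le)
    rw [leaves_restrict, leaves_cherryTree (cherry_subset B'), hB]
    have hcard := card_inter_lt_of_card_eq ((Finset.mem_powersetCard.1 B'.2).2.trans hB3.symm) hBB'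
    exact ⟨by omega, Finset.inter_subset_right⟩
  have := h4 _ hP B.1 (Finset.card_pos.1 (by rw [hB3]; norm_num))
    (hB ▸ leaves_subset_unionLeaves hmem)
  rwa [hpsi] at this

lemma cherryProfile_injective (h1 : OutputsTreeOnInputTaxa ψ) (h2 : Unanimous ψ)
    (h3 : IgnoresRedundantSmallTrees ψ) (h4 : RefinesOnRestriction ψ) :
    Function.Injective fun σ : CherryChoice X => ψ (cherryProfile σ) := by
  intro σ σ' h
  funext B
  have hmem : ∀ τ : CherryChoice X, (τ B).1 ∈ cherryTree B.1 (τ B).1 := fun τ =>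
    Finset.mem_insert_of_mem (Finset.mem_insert_self _ _)
  have hc := cherryTree_subset_restrict h2 h3 h4 B (hmem σ)
  have hc' := cherryTree_subset_restrict h2 h3 h4 B (hmem σ')
  rw [show ψ (cherryProfile σ) = ψ (cherryProfile σ') from h] at hc
  have hcompat := (h1 _ (validProfile_cherryProfile ⟨_, B.2⟩)).1.compatible_of_mem_restrict hc hc'
  refine Subtype.ext (hcompat.eq_of_card_eq (cherry_subset B) (cherry_subset B) ?_ ?_)
  · rw [card_cherry, card_cherry]
  · rw [card_cherry, card_cherry, (Finset.mem_powersetCard.1 B.2).2]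
    norm_num

end CherryProfile

lemma pow_lt_three_pow_choose : (31 ^ 30) ^ 30 < 3 ^ Nat.choose 30 3 :=
  calc (31 ^ 30) ^ 30 = 31 ^ (30 * 30) := (pow_mul 31 30 30).symm
    _ < (3 ^ 4) ^ (30 * 30) := by gcongr; norm_num
    _ = 3 ^ (4 * (30 * 30)) := (pow_mul 3 4 _).symm
    _ < 3 ^ Nat.choose 30 3 := by
        apply Nat.pow_lt_pow_right (by norm_num); decide

/-- No species tree estimator `ψ` simultaneously satisfies (A1⁻), (A2), (A3) and (A4). -/
theorem stmt_14 {α : Type*} [DecidableEq α] [Infinite α] :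
    ¬ ∃ ψ : List (Finset (Finset α)) → Finset (Finset α),
      -- (A1⁻): the output is a rooted tree on some subset of the input taxa
      (∀ P, ValidProfile P → IsTree (ψ P) ∧ leaves (ψ P) ⊆ unionLeaves P) ∧
      -- (A2): unanimity
      (∀ T, IsTree T → ∀ k, 0 < k → ψ (List.replicate k T) = T) ∧
      -- (A3): removing a tree with at most two taxa, each occurring in another
      -- input tree, does not change the output
      (∀ P, ValidProfile P → ∀ i : Fin P.length,
        (leaves (P.get i)).card ≤ 2 →
        (∀ x ∈ leaves (P.get i), ∃ j : Fin P.length, j ≠ i ∧ x ∈ leaves (P.get j)) →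
        P.eraseIdx i ≠ [] →
        ψ (P.eraseIdx i) = ψ P) ∧
      -- (A4): ψ(P|Y) is equal to or refined by ψ(P)|Y
      (∀ P, ValidProfile P → ∀ Y : Finset α, Y.Nonempty → Y ⊆ unionLeaves P →
        ψ (restrictProfile P Y) ⊆ restrict (ψ P) Y) := by
  rintro ⟨ψ, h1, h2, h3, h4⟩
  obtain ⟨X, hX⟩ := Infinite.exists_subset_card_eq α 30
  have htriples : (X.powersetCard 3).Nonempty := Finset.powersetCard_nonempty.2 (by omega)
  have houtput : ∀ σ : CherryChoice X, ψ (cherryProfile σ) ∈ {T | IsTree T ∧ leaves T ⊆ X} :=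
    fun σ => ⟨(h1 _ (validProfile_cherryProfile htriples)).1,
      (h1 _ (validProfile_cherryProfile htriples)).2.trans unionLeaves_cherryProfile_subset⟩
  have hinj : Function.Injective fun σ : CherryChoice X => lcaCode X (ψ (cherryProfile σ)) :=
    fun σ σ' h => cherryProfile_injective h1 h2 h3 h4 (lcaCode_injOn X (houtput σ) (houtput σ') h)
  have hcard := Fintype.card_le_of_injective _ hinj
  rw [card_cherryChoice, Fintype.card_fun, Fintype.card_fun, Fintype.card_fin,
    Fintype.card_coe, hX] at hcard
  exact pow_lt_three_pow_choose.not_ge hcard
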